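/- arXiv:2309.11781 — 5 statements merged into one kernel-verified Lean document; each statement's English description precedes it below -/
import Mathlib

section
/- For all n > 0 and all k with 0 ≤ k ≤ n, the first element of the list C'(n,k) is the string 1^k 0_0 0_1 ⋯ 0_{n-k-1}, i.e. k copies of the symbol 1 followed by the marked zeros 0_0, 0_1, …, 0_{n-k-1} in increasing order of index. -/
/-- Symbols of the strings in the list `C'(n,k)`: the symbol `1` together with
marked zeros `0_i` for `i : ℕ`. -/
inductive MSym : Type
  | one : MSym
  | zero : ℕ → MSym
  deriving DecidableEq, Repr

/-- Decrease the index of every marked zero by `1` modulo `m`; fix the symbol `1`. -/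
def MSym.decIdx (m : ℕ) : MSym → MSym
  | .one => .one
  | .zero i => .zero ((i + m - 1) % m)

/-- The recursively defined list `C'(n,k)` of strings of length `n` over the alphabet of
the symbol `1` and marked zeros:  `C'(n,0) = [0_0 0_1 ⋯ 0_{n-1}]`, `C'(n,n) = [1^n]`, and
for `0 < k < n`, `C'(n,k)` is `C'(n-1,k)` with `0_{n-k-1}` appended to each string,
followed by the reversal of `C'(n-1,k-1)` with every marked-zero index decreased by `1`
modulo `n-k` and the symbol `1` appended to each string. -/
def C' : ℕ → ℕ → List (List MSym)
  | n, 0 => [(List.range n).map MSym.zero]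
  | 0, _ + 1 => []
  | n + 1, k + 1 =>
      if n = k then [List.replicate (n + 1) MSym.one]
      else
        ((C' n (k + 1)).map fun w => w ++ [MSym.zero (n - k - 1)]) ++
          ((C' n k).reverse.map fun w => w.map (MSym.decIdx (n - k)) ++ [MSym.one])

/-- For all `n > 0` and `0 ≤ k ≤ n`, the first element of the list `C'(n,k)` is the
string `1^k 0_0 0_1 ⋯ 0_{n-k-1}`. -/
theorem stmt0 (n k : ℕ) (hn : 0 < n) (hk : k ≤ n) :
    (C' n k).head? =
      some (List.replicate k MSym.one ++ (List.range (n - k)).map MSym.zero) := by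
  induction n generalizing k with
  | zero => omega
  | succ n ih =>
    match k with
    | 0 => simp [C']
    | k + 1 =>
      by_cases h : n = k
      · subst h
        simp [C']
      · have hk' : k + 1 ≤ n := by omega
        have hn' : 0 < n := by omega
        have := ih (k + 1) hn' hk'
        rw [show C' (n + 1) (k + 1) =
            ((C' n (k + 1)).map fun w => w ++ [MSym.zero (n - k - 1)]) ++
              ((C' n k).reverse.map fun w => w.map (MSym.decIdx (n - k)) ++ [MSym.one])
            from by rw [C']; simp [h]]
        obtain ⟨w, ws, hw⟩ : ∃ w ws, C' n (k + 1) = w :: ws := by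
          cases hC : C' n (k + 1) with
          | nil => rw [hC] at this; simp at this
          | cons w ws => exact ⟨w, ws, rfl⟩
        rw [hw] at this ⊢
        simp only [List.head?_cons, Option.some.injEq] at this
        simp only [List.map_cons, List.cons_append, List.head?_cons, Option.some.injEq, this]
        have : n + 1 - (k + 1) = (n - (k + 1)) + 1 := by omega
        rw [this, List.range_succ]
        simp
        omega
end

section
/- For all n > 0 and all k with 0 < k < n, the last element of the list C'(n,k) is the string 1^{k-1} 0_{n-k-1} 0_0 0_1 ⋯ 0_{n-k-2} 1, i.e. k−1 copies of the symbol 1, then the marked zero 0_{n-k-1}, then the marked zeros 0_0, 0_1, …, 0_{n-k-2} in increasing order of index, then the symbol 1. -/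
lemma C'_head (n k : ℕ) (h : k ≤ n) :
    (C' n k).head? = some (List.replicate k MSym.one ++ (List.range (n - k)).map MSym.zero) := by
  induction n generalizing k with
  | zero =>
    interval_cases k
    simp [C']
  | succ n ih =>
    match k with
    | 0 => simp [C']
    | k + 1 =>
      rw [C']
      by_cases hnk : n = k
      · subst hnk
        simp [List.replicate_succ']
      · rw [if_neg hnk]
        have hk : k + 1 ≤ n := Nat.lt_of_le_of_ne (Nat.lt_succ_iff.mp h) (Ne.symm hnk)
        rw [List.head?_append, List.head?_map, ih (k + 1) hk]
        have hm : n - k = (n - k - 1) + 1 := by omega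
        show some _ = _
        congr 1
        rw [show n + 1 - (k + 1) = (n - k - 1) + 1 by omega, List.range_succ]
        simp
        rw [Nat.sub_sub]

lemma C'_ne_nil (n k : ℕ) (h : k ≤ n) : C' n k ≠ [] := by
  intro hnil
  have := C'_head n k h
  rw [hnil] at this
  simp at this

lemma decIdx_range (m : ℕ) (hm : 0 < m) :
    ((List.range m).map MSym.zero).map (MSym.decIdx m) =
      MSym.zero (m - 1) :: (List.range (m - 1)).map MSym.zero := by
  obtain ⟨j, rfl⟩ : ∃ j, m = j + 1 := ⟨m - 1, by omega⟩
  rw [List.range_succ_eq_map]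
  simp only [List.map_cons, List.map_map, Nat.add_sub_cancel, List.cons.injEq]
  refine ⟨by simp [MSym.decIdx, Nat.mod_self], ?_⟩
  apply List.map_congr_left
  intro i hi
  rw [List.mem_range] at hi
  have : (i + 1 + j) % (j + 1) = i := by
    rw [show i + 1 + j = i + (j + 1) by omega, Nat.add_mod_right, Nat.mod_eq_of_lt (by omega)]
  simp [MSym.decIdx, Function.comp, this]

/-- For all `n > 0` and `0 < k < n`, the last element of the list `C'(n,k)` is the string
`1^{k-1} 0_{n-k-1} 0_0 0_1 ⋯ 0_{n-k-2} 1`. -/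
theorem stmt1 (n k : ℕ) (hn : 0 < n) (h0 : 0 < k) (h1 : k < n) :
    (C' n k).getLast? =
      some (List.replicate (k - 1) MSym.one ++
        MSym.zero (n - k - 1) :: (List.range (n - k - 1)).map MSym.zero ++ [MSym.one]) := by
  obtain ⟨n', rfl⟩ : ∃ m, n = m + 1 := ⟨n - 1, by omega⟩
  obtain ⟨k', rfl⟩ : ∃ m, k = m + 1 := ⟨k - 1, by omega⟩
  have hnk : n' ≠ k' := by omega
  have hm : 0 < n' - k' := by omega
  rw [C', if_neg hnk, List.getLast?_append, List.map_reverse, List.getLast?_reverse,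
    List.head?_map, C'_head n' k' (by omega)]
  simp only [Option.map_some, Option.or]
  congr 1
  rw [List.map_append, List.map_replicate, decIdx_range _ hm]
  simp only [MSym.decIdx, List.cons_append, List.append_assoc]
  rw [show n' + 1 - (k' + 1) - 1 = n' - k' - 1 by omega, Nat.add_sub_cancel]
end

section
/- For every state S (every string over the alphabet {o, <, >}), one has M(N(M(S))) = N(S), where M is one iteration of the combination-generating algorithm and N is negation of a state. -/
/-- A cell of a state: `o` is an empty place, `l` is an element oriented left (`<`),
`r` is an element oriented right (`>`). -/
inductive Cell : Type
  | o : Cell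
  | l : Cell
  | r : Cell
  deriving DecidableEq, Repr

/-- Flip the orientation of an element; empty places are fixed. -/
def Cell.flip : Cell → Cell
  | .o => .o
  | .l => .r
  | .r => .l

/-- Is the cell occupied by an element? -/
def Cell.isOcc : Cell → Bool
  | .o => false
  | _ => true

/-- The negation `N` of a state: replace `<` by `>`, `>` by `<`, keep `o`. -/
def negState (S : List Cell) : List Cell := S.map Cell.flip

/-- The position of the nearest empty place strictly to the right of position `a`. -/
def nextO (S : List Cell) (a : ℕ) : Option ℕ :=
  ((S.drop (a + 1)).findIdx? (· == Cell.o)).map (fun off => a + 1 + off)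

/-- The position of the nearest empty place strictly to the left of position `a`. -/
def prevO (S : List Cell) (a : ℕ) : Option ℕ :=
  ((S.take a).reverse.findIdx? (· == Cell.o)).map (fun off => a - 1 - off)

/-- Does every position strictly between positions `i < j` hold the cell `c`? -/
def allBetween (S : List Cell) (i j : ℕ) (c : Cell) : Bool :=
  ((S.drop (i + 1)).take (j - i - 1)).all (· == c)

/-- Set every position `p` with `i ≤ p < j` to the cell `c`. -/
def setRange (S : List Cell) (i j : ℕ) (c : Cell) : List Cell :=
  S.mapIdx fun idx x => if i ≤ idx ∧ idx < j then c else x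

/-- One iteration of the algorithm, processing the active element at position `a`
(an empty cell at `a` means the actual active element is the nearest occupied position
to the left, matching the descent of rule 5).  Rules 2, 3, 4 stop with a successful
move; rule 5 flips the active element and passes activity to the left; if there is no
occupied position to the left the iteration stops (unsuccessfully). -/
def iterAux : List Cell → ℕ → List Cell
  | S, a =>
    match S.getD a Cell.o with
    | .o => if h : a = 0 then S else iterAux S (a - 1)
    | .r =>
      if a + 1 < S.length ∧ S.getD (a + 1) Cell.o = Cell.o then
        -- rule 2 (right)
        (S.set a Cell.o).set (a + 1) Cell.r
      else
        match nextO S a with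
        | some q =>
          if allBetween S a q Cell.r then
            -- rule 4
            (S.set a Cell.o).set q Cell.r
          else
            -- rule 5
            if h : a = 0 then S.set a Cell.l else iterAux (S.set a Cell.l) (a - 1)
        | none =>
            if h : a = 0 then S.set a Cell.l else iterAux (S.set a Cell.l) (a - 1)
    | .l =>
      if 0 < a ∧ S.getD (a - 1) Cell.o = Cell.o then
        -- rule 2 (left)
        (S.set a Cell.o).set (a - 1) Cell.l
      else
        match prevO S a with
        | some p =>
          if allBetween S p a Cell.l then
            -- rule 3
            ((setRange S (p + 1) a Cell.r).set a Cell.o).set p Cell.l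
          else
            -- rule 5
            if h : a = 0 then S.set a Cell.r else iterAux (S.set a Cell.r) (a - 1)
        | none =>
            if h : a = 0 then S.set a Cell.r else iterAux (S.set a Cell.r) (a - 1)
  termination_by S a => a
  decreasing_by all_goals omega

/-- One iteration `M` of the algorithm: the active element is initially the rightmost
occupied position. -/
def Mstep (S : List Cell) : List Cell :=
  iterAux S (S.length - 1)

/-!
Rule 5 flips every element it passes, so when the active element has come down to position `p`
without a move, the state is `flipAbove S p`. If the iteration is unsuccessful, `M S = N S` and
`M (N (M S)) = M S = N S`. Otherwise the element at `p` jumps to the nearest empty place, to the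
right over `>`s (rules 2 and 4) or to the left over `<`s (rules 2 and 3). In `N (M S)` the cells
above the jump hold their values in `S` again, so the descent passes them without a move as it
did in `S`, reaches the element that has just jumped, and the jump back in the opposite direction
restores `N S`.
-/

@[simp] lemma Cell.flip_flip (c : Cell) : c.flip.flip = c := by cases c <;> rfl

@[simp] lemma Cell.flip_eq_o_iff {c : Cell} : c.flip = .o ↔ c = .o := by cases c <;> decide

lemma Cell.flip_eq_r_iff {c : Cell} : c.flip = .r ↔ c = .l := by cases c <;> decide

def cellAt (S : List Cell) (i : ℕ) : Cell := S.getD i .o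

lemma cellAt_def (S : List Cell) (i : ℕ) : cellAt S i = S[i]?.getD .o := by
  simp [cellAt, List.getD_eq_getElem?_getD]

lemma cellAt_of_length_le {S : List Cell} {i : ℕ} (h : S.length ≤ i) : cellAt S i = .o :=
  List.getD_eq_default _ _ h

lemma cellAt_eq_getElem {S : List Cell} {i : ℕ} (h : i < S.length) : cellAt S i = S[i] :=
  List.getD_eq_getElem _ _ h

lemma lt_length_of_cellAt_ne_o {S : List Cell} {i : ℕ} (h : cellAt S i ≠ .o) : i < S.length :=
  not_le.1 fun hi => h (cellAt_of_length_le hi)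

lemma ext_cellAt {S T : List Cell} (hl : S.length = T.length)
    (h : ∀ i, cellAt S i = cellAt T i) : S = T := by
  refine List.ext_getElem hl fun i hS hT => ?_
  rw [← cellAt_eq_getElem hS, ← cellAt_eq_getElem hT, h]

@[simp] lemma length_negState (S : List Cell) : (negState S).length = S.length :=
  List.length_map _

lemma cellAt_negState (S : List Cell) (i : ℕ) : cellAt (negState S) i = (cellAt S i).flip := by
  simp only [cellAt_def, negState, List.getElem?_map]
  cases S[i]? <;> rfl

lemma negState_negState (S : List Cell) : negState (negState S) = S := by
  simp [negState, Function.comp_def]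

lemma cellAt_set (S : List Cell) (j : ℕ) (c : Cell) (i : ℕ) :
    cellAt (S.set j c) i = if j = i ∧ j < S.length then c else cellAt S i := by
  simp only [cellAt_def, List.getElem?_set]
  grind

@[simp] lemma length_setRange (S : List Cell) (i j : ℕ) (c : Cell) :
    (setRange S i j c).length = S.length := List.length_mapIdx

lemma cellAt_setRange (S : List Cell) (a b : ℕ) (c : Cell) (i : ℕ) :
    cellAt (setRange S a b c) i = if a ≤ i ∧ i < b ∧ i < S.length then c else cellAt S i := by
  simp only [cellAt_def, setRange, List.getElem?_mapIdx]
  by_cases hi : i < S.length <;> simp [hi]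

def flipAbove (S : List Cell) (p : ℕ) : List Cell :=
  S.mapIdx fun i x => if i ≤ p then x else x.flip

@[simp] lemma length_flipAbove (S : List Cell) (p : ℕ) :
    (flipAbove S p).length = S.length := List.length_mapIdx

lemma cellAt_flipAbove (S : List Cell) (p i : ℕ) :
    cellAt (flipAbove S p) i = if i ≤ p then cellAt S i else (cellAt S i).flip := by
  simp only [cellAt_def, flipAbove, List.getElem?_mapIdx]
  cases S[i]? <;> split_ifs <;> rfl

lemma cellAt_flipAbove_of_le {S : List Cell} {p i : ℕ} (h : i ≤ p) :
    cellAt (flipAbove S p) i = cellAt S i := by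
  rw [cellAt_flipAbove, if_pos h]

lemma cellAt_flipAbove_of_lt {S : List Cell} {p i : ℕ} (h : p < i) :
    cellAt (flipAbove S p) i = (cellAt S i).flip := by
  rw [cellAt_flipAbove, if_neg (not_le.2 h)]

lemma flipAbove_of_length_le {S : List Cell} {p : ℕ} (h : S.length ≤ p + 1) :
    flipAbove S p = S := by
  refine ext_cellAt (length_flipAbove S p) fun i => ?_
  rw [cellAt_flipAbove]
  split_ifs
  · rfl
  · rw [cellAt_of_length_le (by omega)]; rfl

lemma nextO_eq_some_iff {S : List Cell} {a q : ℕ} :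
    nextO S a = some q ↔
      a < q ∧ q < S.length ∧ cellAt S q = .o ∧
        ∀ k, a < k → k < q → cellAt S k ≠ .o := by
  simp only [nextO, Option.map_eq_some_iff, List.findIdx?_eq_some_iff_getElem, List.length_drop,
    List.getElem_drop, beq_iff_eq]
  constructor
  · rintro ⟨off, ⟨h, hq, hbelow⟩, rfl⟩
    refine ⟨by omega, by omega, by rwa [cellAt_eq_getElem], fun k hak hkq => ?_⟩
    have := hbelow (k - (a + 1)) (by omega)
    rwa [← cellAt_eq_getElem, Nat.add_sub_cancel' (by omega : a + 1 ≤ k)] at this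
  · rintro ⟨haq, hq, hqo, hbelow⟩
    refine ⟨q - (a + 1), ⟨by omega, ?_, fun j hj => ?_⟩, by omega⟩
    · rwa [← cellAt_eq_getElem, Nat.add_sub_cancel' (by omega : a + 1 ≤ q)]
    · rw [← cellAt_eq_getElem]
      exact hbelow _ (by omega) (by omega)

lemma nextO_eq_none_iff {S : List Cell} {a : ℕ} :
    nextO S a = none ↔ ∀ k, a < k → k < S.length → cellAt S k ≠ .o := by
  simp only [nextO, Option.map_eq_none_iff, List.findIdx?_eq_none_iff,
    List.forall_mem_iff_getElem, List.length_drop, List.getElem_drop, beq_eq_false_iff_ne]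
  constructor
  · intro h k hak hk
    have := h (k - (a + 1)) (by omega)
    rwa [← cellAt_eq_getElem, Nat.add_sub_cancel' (by omega : a + 1 ≤ k)] at this
  · intro h j hj
    rw [← cellAt_eq_getElem]
    exact h (a + 1 + j) (by omega) (by omega)

lemma prevO_eq_some_iff {S : List Cell} {a q : ℕ} (ha : a ≤ S.length) :
    prevO S a = some q ↔
      q < a ∧ cellAt S q = .o ∧ ∀ k, q < k → k < a → cellAt S k ≠ .o := by
  simp only [prevO, Option.map_eq_some_iff, List.findIdx?_eq_some_iff_getElem, List.length_reverse,
    List.length_take, List.getElem_reverse, List.getElem_take, beq_iff_eq, Nat.min_eq_left ha]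
  constructor
  · rintro ⟨off, ⟨h, hq, hbelow⟩, rfl⟩
    refine ⟨by omega, by rwa [cellAt_eq_getElem], fun k hqk hka => ?_⟩
    have := hbelow (a - 1 - k) (by omega)
    rwa [← cellAt_eq_getElem, Nat.sub_sub_self (by omega : k ≤ a - 1)] at this
  · rintro ⟨hqa, hqo, hbelow⟩
    refine ⟨a - 1 - q, ⟨by omega, ?_, fun j hj => ?_⟩, by omega⟩
    · rwa [← cellAt_eq_getElem, Nat.sub_sub_self (by omega : q ≤ a - 1)]
    · rw [← cellAt_eq_getElem]
      exact hbelow _ (by omega) (by omega)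

lemma prevO_eq_none_iff {S : List Cell} {a : ℕ} (ha : a ≤ S.length) :
    prevO S a = none ↔ ∀ k, k < a → cellAt S k ≠ .o := by
  simp only [prevO, Option.map_eq_none_iff, List.findIdx?_eq_none_iff, List.forall_mem_iff_getElem,
    List.length_reverse, List.length_take, List.getElem_reverse, List.getElem_take,
    beq_eq_false_iff_ne, Nat.min_eq_left ha]
  constructor
  · intro h k hka
    have := h (a - 1 - k) (by omega)
    rwa [← cellAt_eq_getElem, Nat.sub_sub_self (by omega : k ≤ a - 1)] at this
  · intro h j hj
    rw [← cellAt_eq_getElem]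
    exact h _ (by omega)

lemma exists_prevO_eq_some {S : List Cell} {a w : ℕ} (ha : a ≤ S.length) (hwa : w < a)
    (hw : cellAt S w = .o) :
    ∃ z, prevO S a = some z ∧ w ≤ z ∧ z < a ∧ cellAt S z = .o ∧
      ∀ k, z < k → k < a → cellAt S k ≠ .o := by
  cases h : prevO S a with
  | none => exact absurd hw ((prevO_eq_none_iff ha).1 h w hwa)
  | some z =>
    obtain ⟨hza, hz, hbetween⟩ := (prevO_eq_some_iff ha).1 h
    exact ⟨z, rfl, not_lt.1 fun hwz => hbetween w hwz hwa hw, hza, hz, hbetween⟩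

lemma allBetween_eq_true_iff {S : List Cell} {i j : ℕ} {c : Cell} :
    allBetween S i j c = true ↔ ∀ k, i < k → k < j → k < S.length → cellAt S k = c := by
  simp only [allBetween, List.all_eq_true, List.forall_mem_iff_getElem, List.length_take,
    List.length_drop, List.getElem_take, List.getElem_drop, beq_iff_eq]
  constructor
  · intro h k hik hkj hk
    have := h (k - (i + 1)) (by omega)
    rwa [← cellAt_eq_getElem, Nat.add_sub_cancel' (by omega : i + 1 ≤ k)] at this
  · intro h m hm
    rw [← cellAt_eq_getElem]
    exact h _ (by omega) (by omega) (by omega)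

lemma getD_eq_cellAt (S : List Cell) (i : ℕ) : S.getD i .o = cellAt S i := rfl

lemma nextO_flipAbove (V : List Cell) (p : ℕ) : nextO (flipAbove V p) p = nextO V p := by
  cases h : nextO V p with
  | some q =>
    obtain ⟨hpq, hq, hqo, hbetween⟩ := nextO_eq_some_iff.1 h
    refine nextO_eq_some_iff.2 ⟨hpq, by simpa using hq, ?_, fun k hpk hkq => ?_⟩
    · simp [cellAt_flipAbove_of_lt hpq, hqo]
    · simpa [cellAt_flipAbove_of_lt hpk] using hbetween k hpk hkq
  | none =>
    refine nextO_eq_none_iff.2 fun k hpk hk => ?_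
    simpa [cellAt_flipAbove_of_lt hpk] using nextO_eq_none_iff.1 h k hpk (by simpa using hk)

lemma prevO_flipAbove {V : List Cell} {p : ℕ} (hp : p ≤ V.length) :
    prevO (flipAbove V p) p = prevO V p := by
  have hp' : p ≤ (flipAbove V p).length := by simpa using hp
  cases h : prevO V p with
  | some q =>
    obtain ⟨hqp, hqo, hbetween⟩ := (prevO_eq_some_iff hp).1 h
    refine (prevO_eq_some_iff hp').2 ⟨hqp, ?_, fun k hqk hkp => ?_⟩
    · rwa [cellAt_flipAbove_of_le hqp.le]
    · rw [cellAt_flipAbove_of_le hkp.le]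
      exact hbetween k hqk hkp
  | none =>
    refine (prevO_eq_none_iff hp').2 fun k hkp => ?_
    rw [cellAt_flipAbove_of_le hkp.le]
    exact (prevO_eq_none_iff hp).1 h k hkp

lemma flipAbove_set_flip (V : List Cell) (p : ℕ) :
    (flipAbove V p).set p (cellAt V p).flip =
      if p = 0 then negState V else flipAbove V (p - 1) := by
  refine ext_cellAt (by split_ifs <;> simp) fun i => ?_
  have hout : V.length ≤ p → cellAt V p = .o := cellAt_of_length_le
  rw [cellAt_set, length_flipAbove]
  split_ifs <;> simp only [cellAt_negState, cellAt_flipAbove] <;> grind [Cell.flip]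

lemma flipAbove_of_cellAt_eq_o {V : List Cell} {p : ℕ} (h : cellAt V p = .o) :
    flipAbove V p = if p = 0 then negState V else flipAbove V (p - 1) := by
  rw [← flipAbove_set_flip, h]
  refine (ext_cellAt (by simp) fun i => ?_).symm
  rw [cellAt_set]
  split_ifs with hi
  · rw [← hi.1, cellAt_flipAbove_of_le le_rfl, h]; rfl
  · rfl

/-- No rule among 2, 3, 4 applies to the active element at position `j` of `flipAbove V j`.
The conditions are read off `V`, in which the cells above `j` have the opposite orientation. -/
def Stalls (V : List Cell) (j : ℕ) : Prop :=
  match cellAt V j with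
  | .o => True
  | .r => ¬(j + 1 < V.length ∧ cellAt V (j + 1) = .o) ∧
      ∀ q, nextO V j = some q → ∃ k, j < k ∧ k < q ∧ cellAt V k ≠ .l
  | .l => ¬(0 < j ∧ cellAt V (j - 1) = .o) ∧
      ∀ q, prevO V j = some q → ∃ k, q < k ∧ k < j ∧ cellAt V k ≠ .l

lemma stalls_of_cellAt_eq_o {V : List Cell} {j : ℕ} (h : cellAt V j = .o) : Stalls V j := by
  simp only [Stalls, h]

lemma stalls_iff_of_cellAt_eq_r {V : List Cell} {j : ℕ} (h : cellAt V j = .r) :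
    Stalls V j ↔ ¬(j + 1 < V.length ∧ cellAt V (j + 1) = .o) ∧
      ∀ q, nextO V j = some q → ∃ k, j < k ∧ k < q ∧ cellAt V k ≠ .l := by
  simp only [Stalls, h]

lemma stalls_iff_of_cellAt_eq_l {V : List Cell} {j : ℕ} (h : cellAt V j = .l) :
    Stalls V j ↔ ¬(0 < j ∧ cellAt V (j - 1) = .o) ∧
      ∀ q, prevO V j = some q → ∃ k, q < k ∧ k < j ∧ cellAt V k ≠ .l := by
  simp only [Stalls, h]

lemma iterAux_flipAbove_of_stalls {V : List Cell} {p : ℕ} (hs : Stalls V p) :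
    iterAux (flipAbove V p) p =
      if p = 0 then negState V else iterAux (flipAbove V (p - 1)) (p - 1) := by
  have rule5 : ∀ c, cellAt V p = c.flip →
      (if _ : p = 0 then (flipAbove V p).set p c else iterAux ((flipAbove V p).set p c) (p - 1)) =
        if p = 0 then negState V else iterAux (flipAbove V (p - 1)) (p - 1) := by
    intro c hc
    rw [← Cell.flip_flip c, ← hc, flipAbove_set_flip]
    split_ifs <;> rfl
  rw [iterAux]
  cases hc : cellAt V p with
  | o =>
    simp only [getD_eq_cellAt, cellAt_flipAbove_of_le le_rfl, hc]
    rw [flipAbove_of_cellAt_eq_o hc]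
    split_ifs <;> rfl
  | r =>
    obtain ⟨hno2, hno4⟩ := (stalls_iff_of_cellAt_eq_r hc).1 hs
    simp only [getD_eq_cellAt, cellAt_flipAbove_of_le le_rfl, hc, length_flipAbove,
      cellAt_flipAbove_of_lt (Nat.lt_succ_self p), Cell.flip_eq_o_iff, nextO_flipAbove,
      if_neg hno2]
    cases hq : nextO V p with
    | none => exact rule5 .l hc
    | some q =>
      obtain ⟨k, hpk, hkq, hk⟩ := hno4 q hq
      have hk' : cellAt (flipAbove V p) k ≠ .r := by
        rwa [cellAt_flipAbove_of_lt hpk, Ne, Cell.flip_eq_r_iff]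
      have hklen : k < (flipAbove V p).length := by
        simpa using hkq.trans (nextO_eq_some_iff.1 hq).2.1
      dsimp only
      rw [if_neg fun hall => hk' (allBetween_eq_true_iff.1 hall k hpk hkq hklen)]
      exact rule5 .l hc
  | l =>
    obtain ⟨hno2, hno3⟩ := (stalls_iff_of_cellAt_eq_l hc).1 hs
    have hp : p ≤ V.length := (lt_length_of_cellAt_ne_o (by simp [hc])).le
    simp only [getD_eq_cellAt, cellAt_flipAbove_of_le le_rfl, hc,
      cellAt_flipAbove_of_le (Nat.sub_le p 1), prevO_flipAbove hp, if_neg hno2]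
    cases hq : prevO V p with
    | none => exact rule5 .r hc
    | some q =>
      obtain ⟨k, hqk, hkp, hk⟩ := hno3 q hq
      have hk' : cellAt (flipAbove V p) k ≠ .l := by rwa [cellAt_flipAbove_of_le hkp.le]
      dsimp only
      rw [if_neg fun hall => hk' (allBetween_eq_true_iff.1 hall k hqk hkp (by simp; omega))]
      exact rule5 .r hc

lemma iterAux_flipAbove_of_jump_right {V : List Cell} {p q : ℕ} (h : cellAt V p = .r)
    (hq : nextO V p = some q) (hb : ∀ k, p < k → k < q → cellAt V k = .l) :
    iterAux (flipAbove V p) p = ((flipAbove V p).set p .o).set q .r := by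
  rw [iterAux]
  simp only [getD_eq_cellAt, cellAt_flipAbove_of_le le_rfl, h, length_flipAbove,
    cellAt_flipAbove_of_lt (Nat.lt_succ_self p), Cell.flip_eq_o_iff, nextO_flipAbove, hq]
  split_ifs with h2 hall
  · -- rule 2 is the jump to `q = p + 1`
    obtain ⟨hpq, -, -, hbetween⟩ := nextO_eq_some_iff.1 hq
    rw [show q = p + 1 from le_antisymm (not_lt.1 fun h => hbetween _ (by omega) h h2.2) hpq]
  · rfl
  all_goals
    refine absurd (allBetween_eq_true_iff.2 fun k hpk hkq _ => ?_) hall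
    rw [cellAt_flipAbove_of_lt hpk, hb k hpk hkq]
    rfl

lemma iterAux_flipAbove_of_jump_left {V : List Cell} {p q : ℕ} (h : cellAt V p = .l)
    (hq : prevO V p = some q) (hb : ∀ k, q < k → k < p → cellAt V k = .l) :
    iterAux (flipAbove V p) p =
      ((setRange (flipAbove V p) (q + 1) p .r).set p .o).set q .l := by
  have hp : p ≤ V.length := (lt_length_of_cellAt_ne_o (by simp [h])).le
  rw [iterAux]
  simp only [getD_eq_cellAt, cellAt_flipAbove_of_le le_rfl, h,
    cellAt_flipAbove_of_le (Nat.sub_le p 1), prevO_flipAbove hp, hq]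
  split_ifs with h2 hall
  · -- rule 2 is the jump to `q = p - 1`
    obtain ⟨hqp, -, hbetween⟩ := (prevO_eq_some_iff hp).1 hq
    have hq' : q = p - 1 := le_antisymm (by omega) (not_lt.1 fun h => hbetween _ h (by omega) h2.2)
    subst hq'
    congr
    refine ext_cellAt (by simp) fun i => ?_
    rw [cellAt_setRange, if_neg (by omega)]
  · rfl
  all_goals
    refine absurd (allBetween_eq_true_iff.2 fun k hqk hkp _ => ?_) hall
    rw [cellAt_flipAbove_of_le hkp.le, hb k hqk hkp]

lemma exists_jump_right_of_not_stalls {V : List Cell} {p : ℕ} (h : cellAt V p = .r)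
    (hs : ¬Stalls V p) :
    ∃ q, nextO V p = some q ∧ ∀ k, p < k → k < q → cellAt V k = .l := by
  rw [stalls_iff_of_cellAt_eq_r h, not_and_or, not_not] at hs
  rcases hs with ⟨hp, ho⟩ | hs
  · exact ⟨p + 1, nextO_eq_some_iff.2 ⟨by omega, hp, ho, by omega⟩, by omega⟩
  · push Not at hs
    exact hs

lemma exists_jump_left_of_not_stalls {V : List Cell} {p : ℕ} (h : cellAt V p = .l)
    (hs : ¬Stalls V p) :
    ∃ q, prevO V p = some q ∧ ∀ k, q < k → k < p → cellAt V k = .l := by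
  have hp : p ≤ V.length := (lt_length_of_cellAt_ne_o (by simp [h])).le
  rw [stalls_iff_of_cellAt_eq_l h, not_and_or, not_not] at hs
  rcases hs with ⟨hp0, ho⟩ | hs
  · exact ⟨p - 1, (prevO_eq_some_iff hp).2 ⟨by omega, ho, by omega⟩, by omega⟩
  · push Not at hs
    exact hs

lemma iterAux_flipAbove_eq_of_stalls {X : List Cell} {p t : ℕ} (hpt : p ≤ t)
    (hs : ∀ j, p < j → Stalls X j) :
    iterAux (flipAbove X t) t = iterAux (flipAbove X p) p := by
  induction t with
  | zero => rw [Nat.le_zero.1 hpt]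
  | succ n ih =>
    rcases hpt.eq_or_lt with rfl | hlt
    · rfl
    · rw [iterAux_flipAbove_of_stalls (hs _ hlt), if_neg n.succ_ne_zero, Nat.add_sub_cancel]
      exact ih (by omega)

lemma Mstep_eq_iterAux_flipAbove {X : List Cell} {p : ℕ} (hp : p ≤ X.length - 1)
    (hs : ∀ j, p < j → Stalls X j) : Mstep X = iterAux (flipAbove X p) p := by
  rw [Mstep, ← iterAux_flipAbove_eq_of_stalls hp hs, flipAbove_of_length_le (by omega)]

lemma Mstep_eq_negState_of_stalls {X : List Cell} (hs : ∀ j, Stalls X j) :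
    Mstep X = negState X := by
  rw [Mstep_eq_iterAux_flipAbove (Nat.zero_le _) fun j _ => hs j,
    iterAux_flipAbove_of_stalls (hs 0), if_pos rfl]

lemma nextO_congr {V Y : List Cell} {j : ℕ} (hlen : Y.length = V.length)
    (h : ∀ k, j < k → cellAt Y k = cellAt V k) : nextO Y j = nextO V j := by
  have hdrop : Y.drop (j + 1) = V.drop (j + 1) := by
    refine List.ext_getElem (by simp [hlen]) fun i hiY hiV => ?_
    simp only [List.getElem_drop]
    rw [← cellAt_eq_getElem, ← cellAt_eq_getElem, h _ (by omega)]
  simp only [nextO, hdrop]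

lemma stalls_of_eq_above {V Y : List Cell} {m w j : ℕ} (hlen : Y.length = V.length)
    (hwm : w ≤ m) (hw : cellAt V w = .o) (hl : ∀ k, w < k → k ≤ m → cellAt V k = .l)
    (hY : ∀ k, m < k → cellAt Y k = cellAt V k) (hV : ∀ j, m < j → Stalls V j)
    (hj : m < j) :
    Stalls Y j := by
  cases hc : cellAt Y j with
  | o => exact stalls_of_cellAt_eq_o hc
  | r =>
    obtain ⟨hno2, hno4⟩ := (stalls_iff_of_cellAt_eq_r ((hY j hj).symm.trans hc)).1 (hV j hj)
    rw [stalls_iff_of_cellAt_eq_r hc, nextO_congr hlen fun k hk => hY k (by omega), hlen,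
      hY (j + 1) (by omega)]
    exact ⟨hno2, fun q hq => (hno4 q hq).imp fun k ⟨hjk, hkq, hk⟩ =>
      ⟨hjk, hkq, by rwa [hY k (by omega)]⟩⟩
  | l =>
    have hVj : cellAt V j = .l := (hY j hj).symm.trans hc
    have hjlen : j < V.length := lt_length_of_cellAt_ne_o (by simp [hVj])
    obtain ⟨hno2, hno3⟩ := (stalls_iff_of_cellAt_eq_l hVj).1 (hV j hj)
    obtain ⟨z, hz, hwz, -, -, hzbetween⟩ := exists_prevO_eq_some hjlen.le (by omega) hw
    obtain ⟨k, hzk, hkj, hk⟩ := hno3 z hz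
    -- `k` lies above the changed cells, so it blocks a jump to the left from `j` in `Y` too
    have hmk : m < k := not_le.1 fun hkm => hk (hl k (by omega) hkm)
    rw [stalls_iff_of_cellAt_eq_l hc, hY (j - 1) (by omega)]
    refine ⟨hno2, fun z' hz' => ⟨k, ?_, hkj, by rwa [hY k hmk]⟩⟩
    obtain ⟨hz'j, hz'o, -⟩ := (prevO_eq_some_iff (by omega)).1 hz'
    by_contra! hkz'
    exact hzbetween z' (by omega) hz'j (by rwa [← hY z' (by omega)])

lemma stalls_of_cellAt_eq_l_of_run {V : List Cell} {q j : ℕ} (hqj : q < j)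
    (hq : cellAt V q = .r) (hl : ∀ k, q < k → k ≤ j → cellAt V k = .l) : Stalls V j := by
  have hne : ∀ k, q ≤ k → k < j → cellAt V k ≠ .o := fun k hqk hkj => by
    rcases hqk.eq_or_lt with rfl | hqk
    · simp [hq]
    · simp [hl k hqk hkj.le]
  have hjlen : j < V.length := lt_length_of_cellAt_ne_o (by simp [hl j hqj le_rfl])
  rw [stalls_iff_of_cellAt_eq_l (hl j hqj le_rfl)]
  refine ⟨fun ⟨_, ho⟩ => hne (j - 1) (by omega) (by omega) ho,
    fun z hz => ⟨q, ?_, hqj, by simp [hq]⟩⟩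
  obtain ⟨hzj, hzo, -⟩ := (prevO_eq_some_iff hjlen.le).1 hz
  by_contra! hzq
  exact hne z hzq hzj hzo

lemma Mstep_negState_jump_right {V : List Cell} {a q : ℕ} (ha : cellAt V a = .r)
    (hq : nextO V a = some q) (hb : ∀ k, a < k → k < q → cellAt V k = .l)
    (hV : ∀ j, a < j → Stalls V j) :
    Mstep (negState (((flipAbove V a).set a .o).set q .r)) = negState V := by
  obtain ⟨haq, hqlen, hqo, -⟩ := nextO_eq_some_iff.1 hq
  set Y := negState (((flipAbove V a).set a .o).set q .r) with hYdef
  have hlen : Y.length = V.length := by simp [hYdef]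
  have hY : ∀ i, cellAt Y i =
      if i < a then (cellAt V i).flip else if i = a then .o else if i ≤ q then .l
      else cellAt V i := by
    intro i
    simp only [hYdef, cellAt_negState, cellAt_set, cellAt_flipAbove, List.length_set,
      length_flipAbove]
    grind [Cell.flip, Cell.flip_flip]
  have hYq : cellAt Y q = .l := by rw [hY]; grind
  have hYprev : prevO Y q = some a := by
    refine (prevO_eq_some_iff (by omega)).2 ⟨haq, by rw [hY]; grind, fun k hak hkq => ?_⟩
    rw [hY]
    grind
  have hYs : ∀ j, q < j → Stalls Y j := fun j hj =>
    stalls_of_eq_above hlen le_rfl hqo (fun _ _ _ => by omega)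
      (fun k hk => by rw [hY]; grind) (fun j hj => hV j (by omega)) hj
  rw [Mstep_eq_iterAux_flipAbove (by omega) hYs,
    iterAux_flipAbove_of_jump_left hYq hYprev fun k hak hkq => by rw [hY]; grind]
  refine ext_cellAt (by simp [hlen]) fun i => ?_
  simp only [cellAt_set, cellAt_setRange, cellAt_flipAbove, cellAt_negState, hY, List.length_set,
    length_setRange, length_flipAbove, hlen]
  grind [Cell.flip, Cell.flip_flip]

lemma Mstep_negState_jump_left {V : List Cell} {a q : ℕ} (ha : cellAt V a = .l)
    (hq : prevO V a = some q) (hb : ∀ k, q < k → k < a → cellAt V k = .l)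
    (hV : ∀ j, a < j → Stalls V j) :
    Mstep (negState (((setRange (flipAbove V a) (q + 1) a .r).set a .o).set q .l)) =
      negState V := by
  have halen : a < V.length := lt_length_of_cellAt_ne_o (by simp [ha])
  obtain ⟨hqa, hqo, -⟩ := (prevO_eq_some_iff halen.le).1 hq
  set Y := negState (((setRange (flipAbove V a) (q + 1) a .r).set a .o).set q .l) with hYdef
  have hlen : Y.length = V.length := by simp [hYdef]
  have hY : ∀ i, cellAt Y i =
      if i < q then (cellAt V i).flip else if i = q then .r else if i < a then .l
      else if i = a then .o else cellAt V i := by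
    intro i
    simp only [hYdef, cellAt_negState, cellAt_set, cellAt_setRange, cellAt_flipAbove,
      List.length_set, length_setRange, length_flipAbove]
    grind [Cell.flip, Cell.flip_flip]
  have hYs : ∀ j, q < j → Stalls Y j := by
    intro j hqj
    rcases lt_trichotomy j a with hja | rfl | haj
    · exact stalls_of_cellAt_eq_l_of_run hqj (by rw [hY]; grind) fun k _ _ => by rw [hY]; grind
    · exact stalls_of_cellAt_eq_o (by rw [hY]; grind)
    · exact stalls_of_eq_above hlen hqa.le hqo (fun k _ _ => by grind)
        (fun k _ => by rw [hY]; grind) hV haj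
  have hYnext : nextO Y q = some a :=
    nextO_eq_some_iff.2 ⟨hqa, by omega, by rw [hY]; grind, fun k _ _ => by rw [hY]; grind⟩
  rw [Mstep_eq_iterAux_flipAbove (by omega) hYs,
    iterAux_flipAbove_of_jump_right (by rw [hY]; grind) hYnext fun k _ _ => by rw [hY]; grind]
  refine ext_cellAt (by simp [hlen]) fun i => ?_
  simp only [cellAt_set, cellAt_flipAbove, cellAt_negState, hY, List.length_set,
    length_flipAbove, hlen]
  grind [Cell.flip, Cell.flip_flip]

lemma Mstep_negState_iterAux_flipAbove_of_not_stalls {V : List Cell} {p : ℕ}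
    (hV : ∀ j, p < j → Stalls V j) (hs : ¬Stalls V p) :
    Mstep (negState (iterAux (flipAbove V p) p)) = negState V := by
  cases hc : cellAt V p with
  | o => exact absurd (stalls_of_cellAt_eq_o hc) hs
  | r =>
    obtain ⟨q, hq, hb⟩ := exists_jump_right_of_not_stalls hc hs
    rw [iterAux_flipAbove_of_jump_right hc hq hb]
    exact Mstep_negState_jump_right hc hq hb hV
  | l =>
    obtain ⟨q, hq, hb⟩ := exists_jump_left_of_not_stalls hc hs
    rw [iterAux_flipAbove_of_jump_left hc hq hb]
    exact Mstep_negState_jump_left hc hq hb hV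

lemma Mstep_negState_iterAux_flipAbove {V : List Cell} {p : ℕ}
    (hV : ∀ j, p < j → Stalls V j) :
    Mstep (negState (iterAux (flipAbove V p) p)) = negState V := by
  induction p generalizing V with
  | zero =>
    by_cases hs : Stalls V 0
    · rw [iterAux_flipAbove_of_stalls hs, if_pos rfl, negState_negState]
      exact Mstep_eq_negState_of_stalls fun j => j.eq_zero_or_pos.elim (· ▸ hs) (hV j)
    · exact Mstep_negState_iterAux_flipAbove_of_not_stalls hV hs
  | succ n ih =>
    by_cases hs : Stalls V (n + 1)
    · rw [iterAux_flipAbove_of_stalls hs, if_neg n.succ_ne_zero, Nat.add_sub_cancel]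
      exact ih fun j hj => (Nat.succ_le_of_lt hj).eq_or_lt.elim (· ▸ hs) (hV j)
    · exact Mstep_negState_iterAux_flipAbove_of_not_stalls hV hs

/-- For every state `S`, one has `M(N(M(S))) = N(S)`. -/
theorem stmt7 (S : List Cell) :
    Mstep (negState (Mstep S)) = negState S := by
  have h := Mstep_negState_iterAux_flipAbove (V := S) (p := S.length - 1) fun j hj =>
    stalls_of_cellAt_eq_o (cellAt_of_length_le (by omega))
  rwa [flipAbove_of_length_le (by omega)] at h
end

section
/- Whenever a successful iteration transforms a state S into the state M(S), the sets of occupied positions of S and M(S) differ by moving exactly one element: there are positions i ≠ j such that position i is occupied in S and empty in M(S), position j is empty in S and occupied in M(S), every other position is occupied in S if and only if it is occupied in M(S), and every position strictly between i and j is occupied both in S and in M(S). Thus each step of the algorithm is a transposition of an element with an empty place satisfying the strong homogeneous transposition condition: all places between the two interchanged symbols are occupied by elements. -/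
-- ================= auxiliary lemmas =================

lemma getD_lt {S : List Cell} {a : ℕ} (h : a < S.length) : S.getD a Cell.o = S[a] := by
  simp [List.getD_eq_getElem?_getD, List.getElem?_eq_getElem h]

lemma getD_ne_lt {S : List Cell} {a : ℕ} (h : S.getD a Cell.o ≠ Cell.o) : a < S.length := by
  by_contra hh
  exact h (List.getD_eq_default _ _ (by omega))

lemma getD_set_eq {S : List Cell} {a : ℕ} {c : Cell} (h : a < S.length) :
    (S.set a c).getD a Cell.o = c := by
  simp [List.getD_eq_getElem?_getD, List.getElem?_set_self h]

lemma getD_set_ne {S : List Cell} {a b : ℕ} {c : Cell} (h : a ≠ b) :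
    (S.set a c).getD b Cell.o = S.getD b Cell.o := by
  simp [List.getD_eq_getElem?_getD, List.getElem?_set_ne h]

lemma findO_spec : ∀ (l : List Cell) (i k : ℕ), List.findIdx?.go (· == Cell.o) l i = some k →
    i ≤ k ∧ k - i < l.length ∧ l.getD (k - i) Cell.o = Cell.o := by
  intro l
  induction l with
  | nil => intro i k h; simp [List.findIdx?.go] at h
  | cons x xs ihx =>
    intro i k h
    rw [List.findIdx?.go] at h
    by_cases hx : x = Cell.o
    · rw [if_pos (by simp [hx])] at h
      have hk : k = i := by simpa using h.symm
      subst hk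
      refine ⟨le_refl _, by simp, ?_⟩
      simp [hx]
    · rw [if_neg (by simp [hx])] at h
      obtain ⟨h1, h2, h3⟩ := ihx (i + 1) k h
      refine ⟨by omega, by simp; omega, ?_⟩
      have hki : k - i = (k - (i + 1)) + 1 := by omega
      rw [hki, List.getD_cons_succ]
      exact h3

lemma nextO_spec {S : List Cell} {a q : ℕ} (h : nextO S a = some q) :
    a < q ∧ q < S.length ∧ S.getD q Cell.o = Cell.o := by
  unfold nextO at h
  obtain ⟨off, hf, hq⟩ := Option.map_eq_some_iff.mp h
  obtain ⟨-, h2, h3⟩ := findO_spec _ 0 off hf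
  simp only [Nat.sub_zero] at h2 h3
  rw [List.length_drop] at h2
  subst hq
  have hql : a + 1 + off < S.length := by omega
  refine ⟨by omega, hql, ?_⟩
  rw [getD_lt (by rw [List.length_drop]; omega)] at h3
  rw [List.getElem_drop] at h3
  rw [getD_lt hql]
  exact h3

lemma prevO_spec {S : List Cell} {a p : ℕ} (h : prevO S a = some p) (ha : a ≤ S.length) :
    p < a ∧ S.getD p Cell.o = Cell.o := by
  unfold prevO at h
  obtain ⟨off, hf, hp⟩ := Option.map_eq_some_iff.mp h
  obtain ⟨-, h2, h3⟩ := findO_spec _ 0 off hf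
  simp only [List.length_reverse, List.length_take, lt_min_iff, Nat.sub_zero] at h2
  have hoff : off < a := h2.1
  have hoffS : off < S.length := h2.2
  subst hp
  simp only [Nat.sub_zero] at h3
  refine ⟨by omega, ?_⟩
  rw [getD_lt (by simp only [List.length_reverse, List.length_take]; omega)] at h3
  rw [List.getElem_reverse] at h3
  rw [List.getElem_take] at h3
  rw [getD_lt (by omega)]
  rw [← h3]
  congr 1
  rw [List.length_take]
  omega

lemma allBetween_spec {S : List Cell} {i j : ℕ} {c : Cell} (h : allBetween S i j c = true)
    {p : ℕ} (hip : i < p) (hpj : p < j) (hlen : p < S.length) : S.getD p Cell.o = c := by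
  unfold allBetween at h
  rw [List.all_eq_true] at h
  have hlen2 : p - i - 1 < ((S.drop (i + 1)).take (j - i - 1)).length := by
    simp [List.length_take, List.length_drop]; omega
  have he : ((S.drop (i + 1)).take (j - i - 1))[p - i - 1]'hlen2 = S[p] := by
    rw [List.getElem_take, List.getElem_drop]
    congr 1; omega
  have hm : S[p] ∈ (S.drop (i + 1)).take (j - i - 1) := he ▸ List.getElem_mem hlen2
  have := h _ hm
  rw [getD_lt hlen]
  simpa using this

lemma setRange_length {S : List Cell} {i j : ℕ} {c : Cell} :
    (setRange S i j c).length = S.length := by simp [setRange]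

lemma getD_setRange_in {S : List Cell} {i j p : ℕ} {c : Cell}
    (h1 : i ≤ p) (h2 : p < j) (hl : p < S.length) :
    (setRange S i j c).getD p Cell.o = c := by
  rw [getD_lt (by rw [setRange_length]; exact hl)]
  simp only [setRange, List.getElem_mapIdx]
  rw [if_pos ⟨h1, h2⟩]

lemma getD_setRange_out {S : List Cell} {i j p : ℕ} {c : Cell} (h : ¬(i ≤ p ∧ p < j)) :
    (setRange S i j c).getD p Cell.o = S.getD p Cell.o := by
  by_cases hl : p < S.length
  · rw [getD_lt (by rw [setRange_length]; exact hl), getD_lt hl]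
    simp only [setRange, List.getElem_mapIdx]
    rw [if_neg h]
  · rw [List.getD_eq_default _ _ (by rw [setRange_length]; omega),
      List.getD_eq_default _ _ (by omega)]

/-- The "same occupancy" outcome. -/
def SameO (S T : List Cell) : Prop :=
  T.length = S.length ∧ ∀ p, (T.getD p Cell.o = Cell.o ↔ S.getD p Cell.o = Cell.o)

/-- The "successful move" outcome. -/
def Good (S T : List Cell) : Prop :=
  ∃ i j, i ≠ j ∧ i < S.length ∧ j < S.length ∧
    S.getD i Cell.o ≠ Cell.o ∧ T.getD i Cell.o = Cell.o ∧
    S.getD j Cell.o = Cell.o ∧ T.getD j Cell.o ≠ Cell.o ∧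
    (∀ p, p ≠ i → p ≠ j →
      (S.getD p Cell.o ≠ Cell.o ↔ T.getD p Cell.o ≠ Cell.o)) ∧
    (∀ p, min i j < p → p < max i j →
      S.getD p Cell.o ≠ Cell.o ∧ T.getD p Cell.o ≠ Cell.o)

lemma equivTrans {S S' T : List Cell} (hlen : S'.length = S.length)
    (heq : ∀ x, (S'.getD x Cell.o = Cell.o ↔ S.getD x Cell.o = Cell.o)) :
    (SameO S' T ∨ Good S' T) → (SameO S T ∨ Good S T) := by
  rintro (⟨h1, h2⟩ | ⟨i, j, hij, hi, hj, g1, g2, g3, g4, g5, g6⟩)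
  · exact Or.inl ⟨h1.trans hlen, fun p => (h2 p).trans (heq p)⟩
  · refine Or.inr ⟨i, j, hij, hlen ▸ hi, hlen ▸ hj, fun h => g1 ((heq i).mpr h), g2,
      (heq j).mp g3, g4, fun p hp1 hp2 => Iff.trans (not_congr (heq p)).symm (g5 p hp1 hp2),
      fun p hp1 hp2 => ⟨fun h => (g6 p hp1 hp2).1 ((heq p).mpr h), (g6 p hp1 hp2).2⟩⟩

lemma flip_equiv {S : List Cell} {a : ℕ} {c : Cell} (hocc : S.getD a Cell.o ≠ Cell.o)
    (hc : c ≠ Cell.o) : SameO S (S.set a c) := by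
  refine ⟨by simp, fun x => ?_⟩
  by_cases hx : a = x
  · subst hx
    rw [getD_set_eq (getD_ne_lt hocc)]
    exact ⟨fun h => absurd h hc, fun h => absurd h hocc⟩
  · rw [getD_set_ne hx]

-- ================= main lemma =================

lemma iterAux_spec (a : ℕ) : ∀ S : List Cell,
    SameO S (iterAux S a) ∨ Good S (iterAux S a) := by
  induction a using Nat.strong_induction_on with
  | _ a ih =>
  intro S
  rw [iterAux]
  cases hc : S.getD a Cell.o with
  | o =>
    simp only []
    by_cases h0 : a = 0
    · rw [dif_pos h0]
      exact Or.inl ⟨rfl, fun p => Iff.rfl⟩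
    · rw [dif_neg h0]
      exact ih (a - 1) (by omega) S
  | r =>
    have haS : a < S.length := getD_ne_lt (by rw [hc]; simp)
    simp only []
    by_cases h2 : a + 1 < S.length ∧ S.getD (a + 1) Cell.o = Cell.o
    · rw [if_pos h2]
      -- rule 2 (right)
      obtain ⟨ha1, ho1⟩ := h2
      refine Or.inr ⟨a, a + 1, by omega, haS, ha1, by rw [hc]; simp, ?_, ho1, ?_, ?_, ?_⟩
      · rw [getD_set_ne (by omega), getD_set_eq haS]
      · rw [getD_set_eq (by simpa using ha1)]; simp
      · intro p hp1 hp2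
        rw [getD_set_ne (Ne.symm hp2), getD_set_ne (Ne.symm hp1)]
      · intro p hp1 hp2
        exfalso
        have h1 : min a (a + 1) = a := by omega
        have h2 : max a (a + 1) = a + 1 := by omega
        omega
    · rw [if_neg h2]
      cases hq : nextO S a with
      | some q =>
        obtain ⟨haq, hqS, hqo⟩ := nextO_spec hq
        simp only []
        by_cases hall : allBetween S a q Cell.r = true
        · rw [if_pos hall]
          -- rule 4
          refine Or.inr ⟨a, q, by omega, haS, hqS, by rw [hc]; simp, ?_, hqo, ?_, ?_, ?_⟩
          · rw [getD_set_ne (by omega), getD_set_eq haS]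
          · rw [getD_set_eq (by simpa using hqS)]; simp
          · intro p hp1 hp2
            rw [getD_set_ne (Ne.symm hp2), getD_set_ne (Ne.symm hp1)]
          · intro p hp1 hp2
            have hap : a < p := by omega
            have hpq : p < q := by omega
            have hpo : S.getD p Cell.o = Cell.r :=
              allBetween_spec hall hap hpq (by omega)
            constructor
            · rw [hpo]; simp
            · rw [getD_set_ne (by omega), getD_set_ne (by omega), hpo]; simp
        · -- rule 5
          rw [if_neg hall]
          have hfe := flip_equiv (S := S) (a := a) (c := Cell.l) (by rw [hc]; simp) (by simp)
          by_cases h0 : a = 0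
          <;> [rw [dif_pos h0]; rw [dif_neg h0]]
          · exact Or.inl hfe
          · exact equivTrans hfe.1 hfe.2 (ih (a - 1) (by omega) _)
      | none =>
        simp only []
        have hfe := flip_equiv (S := S) (a := a) (c := Cell.l) (by rw [hc]; simp) (by simp)
        by_cases h0 : a = 0
        <;> [rw [dif_pos h0]; rw [dif_neg h0]]
        · exact Or.inl hfe
        · exact equivTrans hfe.1 hfe.2 (ih (a - 1) (by omega) _)
  | l =>
    have haS : a < S.length := getD_ne_lt (by rw [hc]; simp)
    simp only []
    by_cases h2 : 0 < a ∧ S.getD (a - 1) Cell.o = Cell.o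
    · rw [if_pos h2]
      -- rule 2 (left)
      obtain ⟨ha1, ho1⟩ := h2
      refine Or.inr ⟨a, a - 1, by omega, haS, by omega, by rw [hc]; simp, ?_, ho1, ?_, ?_, ?_⟩
      · rw [getD_set_ne (by omega), getD_set_eq haS]
      · rw [getD_set_eq (by simp; omega)]; simp
      · intro p hp1 hp2
        rw [getD_set_ne (Ne.symm hp2), getD_set_ne (Ne.symm hp1)]
      · intro p hp1 hp2
        exfalso
        omega
    · rw [if_neg h2]
      cases hp : prevO S a with
      | some p =>
        obtain ⟨hpa, hpo⟩ := prevO_spec hp (by omega)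
        simp only []
        by_cases hall : allBetween S p a Cell.l = true
        · rw [if_pos hall]
          -- rule 3
          refine Or.inr ⟨a, p, by omega, haS, by omega, by rw [hc]; simp, ?_, hpo, ?_, ?_, ?_⟩
          · rw [getD_set_ne (by omega), getD_set_eq (by simp [setRange]; omega)]
          · rw [getD_set_eq (by simp [setRange]; omega)]
            simp
          · intro x hx1 hx2
            rw [getD_set_ne (Ne.symm hx2), getD_set_ne (Ne.symm hx1)]
            by_cases hin : p + 1 ≤ x ∧ x < a
            · have hxo : S.getD x Cell.o = Cell.l :=
                allBetween_spec hall (by omega) (by omega) (by omega)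
              rw [getD_setRange_in hin.1 hin.2 (by omega), hxo]
              simp
            · rw [getD_setRange_out hin]
          · intro x hx1 hx2
            have hpx : p < x := by omega
            have hxa : x < a := by omega
            have hxo : S.getD x Cell.o = Cell.l :=
              allBetween_spec hall hpx hxa (by omega)
            constructor
            · rw [hxo]; simp
            · rw [getD_set_ne (by omega), getD_set_ne (by omega),
                getD_setRange_in (by omega) (by omega) (by omega)]
              simp
        · -- rule 5
          rw [if_neg hall]
          have hfe := flip_equiv (S := S) (a := a) (c := Cell.r) (by rw [hc]; simp) (by simp)
          by_cases h0 : a = 0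
          <;> [rw [dif_pos h0]; rw [dif_neg h0]]
          · exact Or.inl hfe
          · exact equivTrans hfe.1 hfe.2 (ih (a - 1) (by omega) _)
      | none =>
        simp only []
        have hfe := flip_equiv (S := S) (a := a) (c := Cell.r) (by rw [hc]; simp) (by simp)
        by_cases h0 : a = 0
        <;> [rw [dif_pos h0]; rw [dif_neg h0]]
        · exact Or.inl hfe
        · exact equivTrans hfe.1 hfe.2 (ih (a - 1) (by omega) _)

lemma maps_eq {S T : List Cell} (h : SameO S T) :
    T.map Cell.isOcc = S.map Cell.isOcc := by
  obtain ⟨hlen, hp⟩ := h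
  apply List.ext_getElem (by simp [hlen])
  intro i h1 h2
  simp only [List.length_map] at h1 h2
  have := hp i
  rw [getD_lt h1, getD_lt h2] at this
  simp only [List.getElem_map]
  cases h' : T[i] <;> cases h'' : S[i] <;> simp_all [Cell.isOcc]
/-- Whenever a successful iteration transforms a state `S` into `M(S)` (i.e. the
occupancy pattern changes), the occupied sets of `S` and `M(S)` differ by moving exactly
one element: there are positions `i ≠ j` with `i` occupied in `S` and empty in `M(S)`,
`j` empty in `S` and occupied in `M(S)`, every other position occupied in `S` iff
occupied in `M(S)`, and every position strictly between `i` and `j` occupied in both. -/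
theorem stmt10 (S : List Cell)
    (hsucc : (Mstep S).map Cell.isOcc ≠ S.map Cell.isOcc) :
    ∃ i j, i ≠ j ∧ i < S.length ∧ j < S.length ∧
      S.getD i Cell.o ≠ Cell.o ∧ (Mstep S).getD i Cell.o = Cell.o ∧
      S.getD j Cell.o = Cell.o ∧ (Mstep S).getD j Cell.o ≠ Cell.o ∧
      (∀ p, p ≠ i → p ≠ j →
        (S.getD p Cell.o ≠ Cell.o ↔ (Mstep S).getD p Cell.o ≠ Cell.o)) ∧
      (∀ p, min i j < p → p < max i j →
        S.getD p Cell.o ≠ Cell.o ∧ (Mstep S).getD p Cell.o ≠ Cell.o) := by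
  rcases iterAux_spec (S.length - 1) S with h | h
  · exact absurd (maps_eq h) hsucc
  · obtain ⟨i, j, hij, hi, hj, g1, g2, g3, g4, g5, g6⟩ := h
    exact ⟨i, j, hij, hi, hj, g1, g2, g3, g4,
      fun p hp1 hp2 => ⟨fun h => ((g5 p hp1 hp2).mp h), fun h => ((g5 p hp1 hp2).mpr h)⟩, g6⟩
end

section
/- If R additionally satisfies S3: R(a,b,c,d) = R(c,d,a,b) and the first Bianchi identity S4: R(a,b,c,d) + R(c,a,b,d) + R(b,c,a,d) = 0 for all a,b,c,d ∈ {1,2,3,4}, then Σ_{σ ∈ V} f(σ) = 32 · ( R(1,2,3,4)^2 + R(1,4,2,3)^2 + R(1,3,2,4)^2 + R(1,2,1,2)·R(3,4,3,4) + R(1,3,1,3)·R(2,4,2,4) + R(1,4,1,4)·R(2,3,2,3) + 2·R(1,2,1,4)·R(2,3,3,4) + 2·R(1,2,2,3)·R(1,4,3,4) − 2·R(1,2,1,3)·R(2,4,3,4) − 2·R(1,2,2,4)·R(1,3,3,4) − 2·R(1,3,1,4)·R(2,3,2,4) − 2·R(1,3,2,3)·R(1,4,2,4) ). -/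
/-- The row in the Young tableau `B_{2,2,2,2}` of each of the entries `1, …, 8`
(everything `0`-indexed: entry `i+1` is index `i : Fin 8`, row `j+1` is `j : Fin 4`):
`y(1)=y(3)=1, y(2)=y(4)=2, y(5)=y(7)=3, y(6)=y(8)=4`. -/
def yRow : Fin 8 → Fin 4 := ![0, 1, 0, 1, 2, 3, 2, 3]

/-- `f(σ) = sign(σ) · R(y(σ1),y(σ2),y(σ3),y(σ4)) · R(y(σ5),y(σ6),y(σ7),y(σ8))`. -/
def fPol (R : Fin 4 → Fin 4 → Fin 4 → Fin 4 → ℝ) (σ : Equiv.Perm (Fin 8)) : ℝ :=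
  ((Equiv.Perm.sign σ : ℤ) : ℝ) *
    (R (yRow (σ 0)) (yRow (σ 1)) (yRow (σ 2)) (yRow (σ 3)) *
      R (yRow (σ 4)) (yRow (σ 5)) (yRow (σ 6)) (yRow (σ 7)))

/-- The entries `{1,2,5,6}` of the first column of `B_{2,2,2,2}` (`0`-indexed). -/
def colA : Finset (Fin 8) := {0, 1, 4, 5}

/-- The entries `{3,4,7,8}` of the second column of `B_{2,2,2,2}` (`0`-indexed). -/
def colB : Finset (Fin 8) := {2, 3, 6, 7}

/-- The vertical subgroup of `B_{2,2,2,2}`, as a finite set of permutations: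
those `σ` with `σ({1,2,5,6}) = {1,2,5,6}` and `σ({3,4,7,8}) = {3,4,7,8}`. -/
def vert : Finset (Equiv.Perm (Fin 8)) :=
  Finset.univ.filter fun σ => colA.image σ = colA ∧ colB.image σ = colB

/-- The subgroup `H` of `S₈` generated by the transpositions
`(1 2), (3 4), (5 6), (7 8)` (`0`-indexed). -/
def Hgrp : Subgroup (Equiv.Perm (Fin 8)) :=
  Subgroup.closure
    {Equiv.swap 0 1, Equiv.swap 2 3, Equiv.swap 4 5, Equiv.swap 6 7}


lemma sum_perm_succ {n : ℕ} (F : Equiv.Perm (Fin (n+1)) → ℝ) :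
    ∑ τ : Equiv.Perm (Fin (n+1)), F τ =
      ∑ i : Fin (n+1), ∑ σ : Equiv.Perm (Fin n), F (Equiv.Perm.decomposeFin.symm (i, σ)) := by
  rw [← Equiv.sum_comp Equiv.Perm.decomposeFin.symm F, Fintype.sum_prod_type]

lemma sum_perm_zero (F : Equiv.Perm (Fin 0) → ℝ) : ∑ τ, F τ = F 1 := by
  rw [Fintype.sum_subsingleton _ 1]

lemma pairSum (X Y : Fin 4 → Fin 4 → ℝ)
    (hX : ∀ a b, X b a = -X a b) (hY : ∀ a b, Y b a = -Y a b) :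
    ∑ τ : Equiv.Perm (Fin 4), ((Equiv.Perm.sign τ : ℤ) : ℝ) * (X (τ 0) (τ 1) * Y (τ 2) (τ 3)) =
      4 * (X 0 1 * Y 2 3 + X 2 3 * Y 0 1 - X 0 2 * Y 1 3 - X 1 3 * Y 0 2
        + X 0 3 * Y 1 2 + X 1 2 * Y 0 3) := by
  simp only [sum_perm_succ, sum_perm_zero]
  simp only [Fin.sum_univ_succ, Finset.univ_unique, Finset.sum_singleton, Finset.univ_eq_empty,
    Finset.sum_empty]
  simp only [show (2:Fin 4) = Fin.succ 1 from rfl, show (3:Fin 4) = Fin.succ 2 from rfl,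
    show (2:Fin 3) = Fin.succ 1 from rfl,
    Equiv.Perm.decomposeFin_symm_apply_zero, Equiv.Perm.decomposeFin_symm_apply_one,
    Equiv.Perm.decomposeFin_symm_apply_succ, Equiv.Perm.decomposeFin.symm_sign,
    Equiv.Perm.one_apply, Equiv.swap_apply_def]
  simp (config := { decide := true }) only [show Fin.succ (2:Fin 3) = (3:Fin 4) from rfl,
    show Fin.succ (1:Fin 3) = (2:Fin 4) from rfl, show Fin.succ (0:Fin 3) = (1:Fin 4) from rfl,
    show Fin.succ (1:Fin 2) = (2:Fin 3) from rfl, show Fin.succ (0:Fin 2) = (1:Fin 3) from rfl,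
    show Fin.succ (0:Fin 1) = (1:Fin 2) from rfl, show (default : Fin 1) = 0 from rfl,
    if_true, if_false, reduceIte, Equiv.Perm.sign_one, Int.cast_one, Units.val_one]
  rw [hX 0 1, hX 0 2, hX 0 3, hX 1 2, hX 1 3, hX 2 3,
    hY 0 1, hY 0 2, hY 0 3, hY 1 2, hY 1 3, hY 2 3]
  simp only [Units.val_mul, Units.val_neg, Units.val_one, Int.cast_mul, Int.cast_neg, Int.cast_one]
  ring


def colEquiv : Fin 8 ≃ (Fin 4 ⊕ Fin 4) where
  toFun := ![Sum.inl 0, Sum.inl 1, Sum.inr 0, Sum.inr 1, Sum.inl 2, Sum.inl 3, Sum.inr 2, Sum.inr 3]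
  invFun := Sum.elim ![0, 1, 4, 5] ![2, 3, 6, 7]
  left_inv := by decide
  right_inv := by rintro (j | j) <;> fin_cases j <;> rfl

def psi (p : Equiv.Perm (Fin 4) × Equiv.Perm (Fin 4)) : Equiv.Perm (Fin 8) :=
  colEquiv.symm.permCongr (Equiv.Perm.sumCongrHom _ _ p)

lemma psi_inj : Function.Injective psi := fun _ _ h =>
  Equiv.Perm.sumCongrHom_injective ((colEquiv.symm.permCongr).injective h)

lemma psi_apply (p : Equiv.Perm (Fin 4) × Equiv.Perm (Fin 4)) (x : Fin 8) :
    psi p x = colEquiv.symm ((Equiv.sumCongr p.1 p.2) (colEquiv x)) := rfl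

lemma mem_colA_iff : ∀ x : Fin 8, x ∈ colA ↔ (colEquiv x).isLeft := by decide
lemma mem_colB_iff : ∀ x : Fin 8, x ∈ colB ↔ (colEquiv x).isRight := by decide

lemma vert_eq : vert = Finset.univ.image psi := by
  ext σ
  simp only [vert, Finset.mem_filter, Finset.mem_univ, true_and, Finset.mem_image]
  constructor
  · rintro ⟨hA, _⟩
    have hmapsA : ∀ x ∈ colA, σ x ∈ colA := fun x hx => by
      rw [← hA]; exact Finset.mem_image_of_mem σ hx
    set π : Equiv.Perm (Fin 4 ⊕ Fin 4) := colEquiv.permCongr σ with hπ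
    have hml : Set.MapsTo π (Set.range Sum.inl) (Set.range Sum.inl) := by
      rintro x ⟨a, rfl⟩
      have h1 : colEquiv.symm (Sum.inl a) ∈ colA := by
        rw [mem_colA_iff]; simp
      have h2 := hmapsA _ h1
      rw [mem_colA_iff] at h2
      have heq : π (Sum.inl a) = colEquiv (σ (colEquiv.symm (Sum.inl a))) := rfl
      rcases Sum.isLeft_iff.mp h2 with ⟨b, hb⟩
      refine ⟨b, ?_⟩
      rw [heq, hb]
    obtain ⟨p, hp⟩ := Equiv.Perm.mem_sumCongrHom_range_of_perm_mapsTo_inl hml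
    refine ⟨p, ?_⟩
    have : psi p = colEquiv.symm.permCongr π := by rw [← hp]; rfl
    rw [this, hπ]
    ext x
    simp [Equiv.permCongr_apply]
  · rintro ⟨p, rfl⟩
    have keyA : ∀ x ∈ colA, psi p x ∈ colA := by
      intro x hx
      rw [mem_colA_iff] at hx ⊢
      rcases Sum.isLeft_iff.mp hx with ⟨a, ha⟩
      rw [psi_apply, ha]
      simp
    have keyB : ∀ x ∈ colB, psi p x ∈ colB := by
      intro x hx
      rw [mem_colB_iff] at hx ⊢
      rcases Sum.isRight_iff.mp hx with ⟨a, ha⟩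
      rw [psi_apply, ha]
      simp
    constructor
    · refine Finset.eq_of_subset_of_card_le ?_ ?_
      · intro y hy
        rcases Finset.mem_image.mp hy with ⟨x, hx, rfl⟩
        exact keyA x hx
      · rw [Finset.card_image_of_injective _ (psi p).injective]
    · refine Finset.eq_of_subset_of_card_le ?_ ?_
      · intro y hy
        rcases Finset.mem_image.mp hy with ⟨x, hx, rfl⟩
        exact keyB x hx
      · rw [Finset.card_image_of_injective _ (psi p).injective]

lemma yRow_inl : ∀ j : Fin 4, yRow (colEquiv.symm (Sum.inl j)) = j := by decide
lemma yRow_inr : ∀ j : Fin 4, yRow (colEquiv.symm (Sum.inr j)) = j := by decide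

lemma fPol_psi (R : Fin 4 → Fin 4 → Fin 4 → Fin 4 → ℝ) (τ ρ : Equiv.Perm (Fin 4)) :
    fPol R (psi (τ, ρ)) =
      ((Equiv.Perm.sign τ : ℤ) : ℝ) * (((Equiv.Perm.sign ρ : ℤ) : ℝ) *
        (R (τ 0) (τ 1) (ρ 0) (ρ 1) * R (τ 2) (τ 3) (ρ 2) (ρ 3))) := by
  have hsign : Equiv.Perm.sign (psi (τ, ρ)) = Equiv.Perm.sign τ * Equiv.Perm.sign ρ := by
    unfold psi
    rw [Equiv.Perm.sign_permCongr]
    exact Equiv.Perm.sign_sumCongr τ ρ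
  have e0 : yRow (psi (τ, ρ) 0) = τ 0 := yRow_inl (τ 0)
  have e1 : yRow (psi (τ, ρ) 1) = τ 1 := yRow_inl (τ 1)
  have e2 : yRow (psi (τ, ρ) 2) = ρ 0 := yRow_inr (ρ 0)
  have e3 : yRow (psi (τ, ρ) 3) = ρ 1 := yRow_inr (ρ 1)
  have e4 : yRow (psi (τ, ρ) 4) = τ 2 := yRow_inl (τ 2)
  have e5 : yRow (psi (τ, ρ) 5) = τ 3 := yRow_inl (τ 3)
  have e6 : yRow (psi (τ, ρ) 6) = ρ 2 := yRow_inr (ρ 2)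
  have e7 : yRow (psi (τ, ρ) 7) = ρ 3 := yRow_inr (ρ 3)
  rw [fPol, hsign, e0, e1, e2, e3, e4, e5, e6, e7]
  push_cast
  ring

/-- If `R` additionally satisfies `S3` and the first Bianchi identity `S4`, then
`Σ_{σ ∈ V} f(σ)` equals `32` times the stated polynomial in the values of `R`
(indices `1,2,3,4` of the paper are `0,1,2,3` here). -/
theorem stmt16 (R : Fin 4 → Fin 4 → Fin 4 → Fin 4 → ℝ)
    (hS1 : ∀ a b c d, R a b c d = -R b a c d)
    (hS2 : ∀ a b c d, R a b c d = -R a b d c)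
    (hS3 : ∀ a b c d, R a b c d = R c d a b)
    (hS4 : ∀ a b c d, R a b c d + R c a b d + R b c a d = 0) :
    ∑ σ ∈ vert, fPol R σ =
      32 * (R 0 1 2 3 ^ 2 + R 0 3 1 2 ^ 2 + R 0 2 1 3 ^ 2 +
        R 0 1 0 1 * R 2 3 2 3 + R 0 2 0 2 * R 1 3 1 3 + R 0 3 0 3 * R 1 2 1 2 +
        2 * R 0 1 0 3 * R 1 2 2 3 + 2 * R 0 1 1 2 * R 0 3 2 3 -
        2 * R 0 1 0 2 * R 1 3 2 3 - 2 * R 0 1 1 3 * R 0 2 2 3 -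
        2 * R 0 2 0 3 * R 1 2 1 3 - 2 * R 0 2 1 2 * R 0 3 1 3) := by
  have hanti2 : ∀ a b c d : Fin 4, R a b d c = -R a b c d := fun a b c d => hS2 a b d c
  have hanti1 : ∀ a b c d : Fin 4, R b a c d = -R a b c d := fun a b c d => hS1 b a c d
  have h1 : ∑ σ ∈ vert, fPol R σ =
      ∑ p : Equiv.Perm (Fin 4) × Equiv.Perm (Fin 4), fPol R (psi p) := by
    rw [vert_eq, Finset.sum_image (fun x _ y _ h => psi_inj h)]
  rw [h1, Fintype.sum_prod_type]
  have h2 : ∀ τ : Equiv.Perm (Fin 4), ∑ ρ : Equiv.Perm (Fin 4), fPol R (psi (τ, ρ)) =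
      ((Equiv.Perm.sign τ : ℤ) : ℝ) * (4 *
        (R (τ 0) (τ 1) 0 1 * R (τ 2) (τ 3) 2 3 + R (τ 0) (τ 1) 2 3 * R (τ 2) (τ 3) 0 1
          - R (τ 0) (τ 1) 0 2 * R (τ 2) (τ 3) 1 3 - R (τ 0) (τ 1) 1 3 * R (τ 2) (τ 3) 0 2
          + R (τ 0) (τ 1) 0 3 * R (τ 2) (τ 3) 1 2 + R (τ 0) (τ 1) 1 2 * R (τ 2) (τ 3) 0 3)) := by
    intro τ
    simp only [fPol_psi]
    rw [← Finset.mul_sum]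
    congr 1
    exact pairSum (fun a b => R (τ 0) (τ 1) a b) (fun a b => R (τ 2) (τ 3) a b)
      (fun a b => hanti2 _ _ a b) (fun a b => hanti2 _ _ a b)
  simp only [h2]
  have h3 : ∀ τ : Equiv.Perm (Fin 4), ((Equiv.Perm.sign τ : ℤ) : ℝ) * (4 *
        (R (τ 0) (τ 1) 0 1 * R (τ 2) (τ 3) 2 3 + R (τ 0) (τ 1) 2 3 * R (τ 2) (τ 3) 0 1
          - R (τ 0) (τ 1) 0 2 * R (τ 2) (τ 3) 1 3 - R (τ 0) (τ 1) 1 3 * R (τ 2) (τ 3) 0 2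
          + R (τ 0) (τ 1) 0 3 * R (τ 2) (τ 3) 1 2 + R (τ 0) (τ 1) 1 2 * R (τ 2) (τ 3) 0 3)) =
      4 * (((Equiv.Perm.sign τ : ℤ) : ℝ) * (R (τ 0) (τ 1) 0 1 * R (τ 2) (τ 3) 2 3))
      + 4 * (((Equiv.Perm.sign τ : ℤ) : ℝ) * (R (τ 0) (τ 1) 2 3 * R (τ 2) (τ 3) 0 1))
      - 4 * (((Equiv.Perm.sign τ : ℤ) : ℝ) * (R (τ 0) (τ 1) 0 2 * R (τ 2) (τ 3) 1 3))
      - 4 * (((Equiv.Perm.sign τ : ℤ) : ℝ) * (R (τ 0) (τ 1) 1 3 * R (τ 2) (τ 3) 0 2))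
      + 4 * (((Equiv.Perm.sign τ : ℤ) : ℝ) * (R (τ 0) (τ 1) 0 3 * R (τ 2) (τ 3) 1 2))
      + 4 * (((Equiv.Perm.sign τ : ℤ) : ℝ) * (R (τ 0) (τ 1) 1 2 * R (τ 2) (τ 3) 0 3)) :=
    fun τ => by ring
  simp only [h3]
  rw [Finset.sum_add_distrib, Finset.sum_add_distrib, Finset.sum_sub_distrib,
    Finset.sum_sub_distrib, Finset.sum_add_distrib]
  rw [← Finset.mul_sum, ← Finset.mul_sum, ← Finset.mul_sum, ← Finset.mul_sum,
    ← Finset.mul_sum, ← Finset.mul_sum]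
  have p1 : ∑ τ : Equiv.Perm (Fin 4), ((Equiv.Perm.sign τ : ℤ) : ℝ) *
      (R (τ 0) (τ 1) 0 1 * R (τ 2) (τ 3) 2 3) =
      4 * (R 0 1 0 1 * R 2 3 2 3 + R 2 3 0 1 * R 0 1 2 3 - R 0 2 0 1 * R 1 3 2 3
        - R 1 3 0 1 * R 0 2 2 3 + R 0 3 0 1 * R 1 2 2 3 + R 1 2 0 1 * R 0 3 2 3) :=
    pairSum (fun a b => R a b 0 1) (fun a b => R a b 2 3)
      (fun a b => hanti1 a b 0 1) (fun a b => hanti1 a b 2 3)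
  have p2 : ∑ τ : Equiv.Perm (Fin 4), ((Equiv.Perm.sign τ : ℤ) : ℝ) *
      (R (τ 0) (τ 1) 2 3 * R (τ 2) (τ 3) 0 1) =
      4 * (R 0 1 2 3 * R 2 3 0 1 + R 2 3 2 3 * R 0 1 0 1 - R 0 2 2 3 * R 1 3 0 1
        - R 1 3 2 3 * R 0 2 0 1 + R 0 3 2 3 * R 1 2 0 1 + R 1 2 2 3 * R 0 3 0 1) :=
    pairSum (fun a b => R a b 2 3) (fun a b => R a b 0 1)
      (fun a b => hanti1 a b 2 3) (fun a b => hanti1 a b 0 1)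
  have p3 : ∑ τ : Equiv.Perm (Fin 4), ((Equiv.Perm.sign τ : ℤ) : ℝ) *
      (R (τ 0) (τ 1) 0 2 * R (τ 2) (τ 3) 1 3) =
      4 * (R 0 1 0 2 * R 2 3 1 3 + R 2 3 0 2 * R 0 1 1 3 - R 0 2 0 2 * R 1 3 1 3
        - R 1 3 0 2 * R 0 2 1 3 + R 0 3 0 2 * R 1 2 1 3 + R 1 2 0 2 * R 0 3 1 3) :=
    pairSum (fun a b => R a b 0 2) (fun a b => R a b 1 3)
      (fun a b => hanti1 a b 0 2) (fun a b => hanti1 a b 1 3)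
  have p4 : ∑ τ : Equiv.Perm (Fin 4), ((Equiv.Perm.sign τ : ℤ) : ℝ) *
      (R (τ 0) (τ 1) 1 3 * R (τ 2) (τ 3) 0 2) =
      4 * (R 0 1 1 3 * R 2 3 0 2 + R 2 3 1 3 * R 0 1 0 2 - R 0 2 1 3 * R 1 3 0 2
        - R 1 3 1 3 * R 0 2 0 2 + R 0 3 1 3 * R 1 2 0 2 + R 1 2 1 3 * R 0 3 0 2) :=
    pairSum (fun a b => R a b 1 3) (fun a b => R a b 0 2)
      (fun a b => hanti1 a b 1 3) (fun a b => hanti1 a b 0 2)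
  have p5 : ∑ τ : Equiv.Perm (Fin 4), ((Equiv.Perm.sign τ : ℤ) : ℝ) *
      (R (τ 0) (τ 1) 0 3 * R (τ 2) (τ 3) 1 2) =
      4 * (R 0 1 0 3 * R 2 3 1 2 + R 2 3 0 3 * R 0 1 1 2 - R 0 2 0 3 * R 1 3 1 2
        - R 1 3 0 3 * R 0 2 1 2 + R 0 3 0 3 * R 1 2 1 2 + R 1 2 0 3 * R 0 3 1 2) :=
    pairSum (fun a b => R a b 0 3) (fun a b => R a b 1 2)
      (fun a b => hanti1 a b 0 3) (fun a b => hanti1 a b 1 2)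
  have p6 : ∑ τ : Equiv.Perm (Fin 4), ((Equiv.Perm.sign τ : ℤ) : ℝ) *
      (R (τ 0) (τ 1) 1 2 * R (τ 2) (τ 3) 0 3) =
      4 * (R 0 1 1 2 * R 2 3 0 3 + R 2 3 1 2 * R 0 1 0 3 - R 0 2 1 2 * R 1 3 0 3
        - R 1 3 1 2 * R 0 2 0 3 + R 0 3 1 2 * R 1 2 0 3 + R 1 2 1 2 * R 0 3 0 3) :=
    pairSum (fun a b => R a b 1 2) (fun a b => R a b 0 3)
      (fun a b => hanti1 a b 1 2) (fun a b => hanti1 a b 0 3)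
  rw [p1, p2, p3, p4, p5, p6]
  have c0201 : R 0 2 0 1 = R 0 1 0 2 := hS3 0 2 0 1
  have c0301 : R 0 3 0 1 = R 0 1 0 3 := hS3 0 3 0 1
  have c0302 : R 0 3 0 2 = R 0 2 0 3 := hS3 0 3 0 2
  have c1201 : R 1 2 0 1 = R 0 1 1 2 := hS3 1 2 0 1
  have c1202 : R 1 2 0 2 = R 0 2 1 2 := hS3 1 2 0 2
  have c1203 : R 1 2 0 3 = R 0 3 1 2 := hS3 1 2 0 3
  have c1301 : R 1 3 0 1 = R 0 1 1 3 := hS3 1 3 0 1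
  have c1302 : R 1 3 0 2 = R 0 2 1 3 := hS3 1 3 0 2
  have c1303 : R 1 3 0 3 = R 0 3 1 3 := hS3 1 3 0 3
  have c1312 : R 1 3 1 2 = R 1 2 1 3 := hS3 1 3 1 2
  have c2301 : R 2 3 0 1 = R 0 1 2 3 := hS3 2 3 0 1
  have c2302 : R 2 3 0 2 = R 0 2 2 3 := hS3 2 3 0 2
  have c2303 : R 2 3 0 3 = R 0 3 2 3 := hS3 2 3 0 3
  have c2312 : R 2 3 1 2 = R 1 2 2 3 := hS3 2 3 1 2
  have c2313 : R 2 3 1 3 = R 1 3 2 3 := hS3 2 3 1 3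
  simp only [c0201, c0301, c0302, c1201, c1202, c1203, c1301, c1302, c1303, c1312, c2301, c2302, c2303, c2312, c2313]
  ring
end
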